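/- arXiv:quant-ph/0504095 — 5 statements merged into one kernel-verified Lean document; each statement's English description precedes it below -/
import Mathlib

section
/- (Proposition 1, numerical form.) For every finite family f₁, …, f_s of functions ℝ → ℝ, each monotone nondecreasing on [0,1], concave on [0,1], and satisfying f_k(0) = 0 and f_k(1) = 1, there exist real numbers p₁ ∈ (0,1), x₂ and y with 0 < x₂ < y ≤ 1 such that p₁·f_k(1) + (1−p₁)·f_k(x₂) ≥ f_k(y) for every k = 1, …, s. (By Nielsen's theorem, x₂ < y means the corresponding state transformation |ψ₂⟩ → |φ⟩ is not realizable by LOCC, so the probability-distribution transformation with initial states of entanglement parameters x₁ = 1, x₂ and final state of parameter y is not local, even though all s monotone inequalities are satisfied.) -/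
/-- Proposition 1 (numerical form): for any finite family `f 1, …, f s` of
normalized entanglement monotones (monotone nondecreasing on `[0,1]`,
concave on `[0,1]`, `f k 0 = 0`, `f k 1 = 1`), there exist `p₁ ∈ (0,1)` and
`0 < x₂ < y ≤ 1` such that `p₁ · f k 1 + (1 − p₁) · f k x₂ ≥ f k y` for
every `k`, even though `x₂ < y` (so the transformation is not local). -/
theorem proposition1_numerical (s : ℕ) (f : Fin s → ℝ → ℝ)
    (hmono : ∀ k, ∀ a ∈ Set.Icc (0:ℝ) 1, ∀ b ∈ Set.Icc (0:ℝ) 1, a ≤ b → f k a ≤ f k b)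
    (hconc : ∀ k, ∀ a ∈ Set.Icc (0:ℝ) 1, ∀ b ∈ Set.Icc (0:ℝ) 1, ∀ t ∈ Set.Icc (0:ℝ) 1,
      t * f k a + (1 - t) * f k b ≤ f k (t * a + (1 - t) * b))
    (h0 : ∀ k, f k 0 = 0) (h1 : ∀ k, f k 1 = 1) :
    ∃ p₁ x₂ y : ℝ, 0 < p₁ ∧ p₁ < 1 ∧ 0 < x₂ ∧ x₂ < y ∧ y ≤ 1 ∧
      ∀ k, p₁ * f k 1 + (1 - p₁) * f k x₂ ≥ f k y := by
  rcases Nat.eq_zero_or_pos s with hs | hs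
  · subst hs
    exact ⟨1/2, 1/2, 3/4, by norm_num, by norm_num, by norm_num, by norm_num, by norm_num,
      fun k => k.elim0⟩
  have hne : Nonempty (Fin s) := ⟨⟨0, hs⟩⟩
  set g : Fin s → ℝ := fun k => if f k (1/2) < 1 then f k (1/2) else 1/2 with hg
  set c : ℝ := Finset.univ.sup' Finset.univ_nonempty g with hc
  clear_value c
  -- bounds on c
  have hc1 : c < 1 := by
    rw [hc, Finset.sup'_lt_iff]
    intro k _
    simp only [hg]
    split <;> [assumption; norm_num]
  have hfnonneg : ∀ k, 0 ≤ f k (1/2) := by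
    intro k
    have := hmono k 0 (by norm_num) (1/2) (by norm_num) (by norm_num)
    rw [h0 k] at this; exact this
  have hc0 : (0:ℝ) ≤ c := by
    rw [hc]
    refine le_trans ?_ (Finset.le_sup' g (Finset.mem_univ ⟨0, hs⟩))
    simp only [hg]
    split
    · exact hfnonneg _
    · norm_num
  set y : ℝ := 1/2 + (1 - c)/8 with hy
  clear_value y
  have hy_half : (1/2 : ℝ) < y := by rw [hy]; linarith
  have hy_le1 : y ≤ 1 := by rw [hy]; linarith
  have hy_pos : (0:ℝ) < y := by linarith
  refine ⟨1/2, 1/2, y, by norm_num, by norm_num, by norm_num, hy_half, hy_le1, ?_⟩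
  intro k
  rw [h1 k]
  have hfle1 : f k y ≤ 1 := by
    have := hmono k y ⟨le_of_lt hy_pos, hy_le1⟩ 1 (by norm_num) hy_le1
    rwa [h1 k] at this
  by_cases hk : f k (1/2) < 1
  · -- f k (1/2) ≤ c
    have hlec : f k (1/2) ≤ c := by
      rw [hc]
      have := Finset.le_sup' g (Finset.mem_univ k)
      simpa only [hg, if_pos hk] using this
    -- concavity: f k y ≤ 2y * f k (1/2)
    set t : ℝ := 1 / (2 * y) with ht
    clear_value t
    have ht0 : 0 < t := by rw [ht]; exact div_pos one_pos (by linarith)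
    have ht1 : t ≤ 1 := by
      rw [ht, div_le_one (by linarith)]
      linarith
    have hconv : t * y + (1 - t) * 0 = 1/2 := by
      rw [ht]; field_simp; ring
    have hcc := hconc k y ⟨le_of_lt hy_pos, hy_le1⟩ 0 (by norm_num) t ⟨le_of_lt ht0, ht1⟩
    rw [hconv, h0 k] at hcc
    have hkey : f k y ≤ 2 * y * f k (1/2) := by
      have h2y : (0:ℝ) < 2 * y := by linarith
      have : t * f k y ≤ f k (1/2) := by linarith
      calc f k y = (2 * y) * (t * f k y) := by rw [ht]; field_simp
        _ ≤ (2 * y) * f k (1/2) := by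
            exact mul_le_mul_of_nonneg_left this (le_of_lt h2y)
    -- target: 1/2 * 1 + (1/2) * f k (1/2) ≥ f k y
    have hf0 : 0 ≤ f k (1/2) := hfnonneg k
    nlinarith [mul_le_mul_of_nonneg_left hlec (show (0:ℝ) ≤ 2*y - 1/2 by linarith),
      sq_nonneg (1 - c)]
  · push_neg at hk
    nlinarith [hfle1, hk]
end

section
/- (Sufficiency direction of Proposition 2, numerical form.) Let p₁, p₂ > 0 with p₁ + p₂ = 1, let q₁, q₂ ≥ 0 with q₁ + q₂ = 1, and let x₁, x₂, y₁, y₂ ∈ [0,1] with x₁ ≥ x₂ and y₁ ≥ y₂. Suppose that for every μ ∈ [0,1], p₁·f_μ(x₁) + p₂·f_μ(x₂) ≥ q₁·f_μ(y₁) + q₂·f_μ(y₂). Then there exist r₁, r₂ ∈ [0,1] such that q₁ = p₁·r₁ + p₂·r₂, x₁ ≥ r₁·y₁ + (1−r₁)·y₂, and x₂ ≥ r₂·y₁ + (1−r₂)·y₂. -/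
/-- The family of functions `f_μ`: for `μ ∈ (0,1]`, `f_μ x = min (x/μ) 1`;
for `μ = 0`, the Schmidt function `f₀ 0 = 0` and `f₀ x = 1` for `x ≠ 0`. -/
noncomputable def fmu (μ x : ℝ) : ℝ :=
  if μ = 0 then (if x = 0 then 0 else 1) else min (x / μ) 1

/-- Sufficiency direction of Proposition 2 (numerical form): if the monotone
conditions `E_μ(D₁) ≥ E_μ(D₂)` hold for all `μ ∈ [0,1]`, then there exist
conditional probabilities `r₁, r₂` witnessing (via the Jonathan–Plenio
theorem) that the transformation `D₁ → D₂` is realizable by LOCC. -/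
theorem proposition2_sufficiency (p₁ p₂ q₁ q₂ : ℝ)
    (hp₁ : 0 < p₁) (hp₂ : 0 < p₂) (hq₁ : 0 ≤ q₁) (hq₂ : 0 ≤ q₂)
    (hp : p₁ + p₂ = 1) (hq : q₁ + q₂ = 1)
    (x₁ x₂ y₁ y₂ : ℝ)
    (hx₁ : x₁ ∈ Set.Icc (0:ℝ) 1) (hx₂ : x₂ ∈ Set.Icc (0:ℝ) 1)
    (hy₁ : y₁ ∈ Set.Icc (0:ℝ) 1) (hy₂ : y₂ ∈ Set.Icc (0:ℝ) 1)
    (hx : x₁ ≥ x₂) (hy : y₁ ≥ y₂)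
    (hE : ∀ μ ∈ Set.Icc (0:ℝ) 1,
      p₁ * fmu μ x₁ + p₂ * fmu μ x₂ ≥ q₁ * fmu μ y₁ + q₂ * fmu μ y₂) :
    ∃ r₁ ∈ Set.Icc (0:ℝ) 1, ∃ r₂ ∈ Set.Icc (0:ℝ) 1,
      q₁ = p₁ * r₁ + p₂ * r₂ ∧
      x₁ ≥ r₁ * y₁ + (1 - r₁) * y₂ ∧
      x₂ ≥ r₂ * y₁ + (1 - r₂) * y₂ := by
  obtain ⟨hx₁0, hx₁1⟩ := hx₁
  obtain ⟨hx₂0, hx₂1⟩ := hx₂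
  obtain ⟨hy₁0, hy₁1⟩ := hy₁
  obtain ⟨hy₂0, hy₂1⟩ := hy₂
  -- Step 1: x₂ ≥ y₂
  have hx2y2 : x₂ ≥ y₂ := by
    by_contra h
    push_neg at h
    have hy₂pos : 0 < y₂ := lt_of_le_of_lt hx₂0 h
    have hne : y₂ ≠ 0 := ne_of_gt hy₂pos
    have hEy := hE y₂ ⟨hy₂0, hy₂1⟩
    simp only [fmu, if_neg hne] at hEy
    have h1 : min (y₂ / y₂) 1 = 1 := by rw [div_self hne]; simp
    have h2 : min (y₁ / y₂) 1 = 1 := by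
      rw [min_eq_right]
      exact (one_le_div hy₂pos).mpr hy
    rw [h1, h2] at hEy
    have h3 : min (x₂ / y₂) 1 < 1 :=
      lt_of_le_of_lt (min_le_left _ _) ((div_lt_one hy₂pos).mpr h)
    have h4 : min (x₁ / y₂) 1 ≤ 1 := min_le_right _ _
    nlinarith [h3, h4, hEy]
  have hx1y2 : x₁ ≥ y₂ := le_trans hx2y2 hx
  -- Case split on y₁ = y₂ vs y₁ > y₂
  rcases eq_or_lt_of_le hy with heq | hlt
  · -- y₁ = y₂ : take r₁ = r₂ = q₁
    refine ⟨q₁, ⟨hq₁, by linarith⟩, q₁, ⟨hq₁, by linarith⟩, by nlinarith, ?_, ?_⟩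
    · nlinarith [mul_nonneg hq₁ (sub_nonneg.mpr hy), hq₂]
    · nlinarith [mul_nonneg hq₁ (sub_nonneg.mpr hy), hq₂]
  · -- y₁ > y₂
    have hy₁pos : 0 < y₁ := lt_of_le_of_lt hy₂0 hlt
    have hy₁ne : y₁ ≠ 0 := ne_of_gt hy₁pos
    obtain ⟨s, hsdef⟩ : ∃ s : ℝ, s = y₁ - y₂ := ⟨_, rfl⟩
    obtain ⟨A, hAdef⟩ : ∃ A : ℝ, A = min x₁ y₁ - y₂ := ⟨_, rfl⟩
    obtain ⟨B, hBdef⟩ : ∃ B : ℝ, B = min x₂ y₁ - y₂ := ⟨_, rfl⟩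
    have hs : 0 < s := by rw [hsdef]; linarith
    have hsne : s ≠ 0 := ne_of_gt hs
    have hA0 : 0 ≤ A := by
      have h := le_min hx1y2 (le_of_lt hlt)
      rw [hAdef]; linarith
    have hB0 : 0 ≤ B := by
      have h := le_min hx2y2 (le_of_lt hlt)
      rw [hBdef]; linarith
    have hAs : A ≤ s := by
      have h : min x₁ y₁ ≤ y₁ := min_le_right _ _
      rw [hAdef, hsdef]; linarith
    have hBs : B ≤ s := by
      have h : min x₂ y₁ ≤ y₁ := min_le_right _ _
      rw [hBdef, hsdef]; linarith
    have hAx : A ≤ x₁ - y₂ := by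
      have h : min x₁ y₁ ≤ x₁ := min_le_left _ _
      rw [hAdef]; linarith
    have hBx : B ≤ x₂ - y₂ := by
      have h : min x₂ y₁ ≤ x₂ := min_le_left _ _
      rw [hBdef]; linarith
    -- Key inequality from μ = y₁
    have key : q₁ * s ≤ p₁ * A + p₂ * B := by
      have hEy := hE y₁ ⟨hy₁0, hy₁1⟩
      simp only [fmu, if_neg hy₁ne] at hEy
      have h1 : min (y₁ / y₁) 1 = 1 := by rw [div_self hy₁ne]; simp
      have h2 : min (y₂ / y₁) 1 = y₂ / y₁ := by
        rw [min_eq_left]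
        exact (div_le_one hy₁pos).mpr (le_of_lt hlt)
      have h3 : min (x₁ / y₁) 1 = min x₁ y₁ / y₁ := by
        rcases le_total x₁ y₁ with h | h
        · rw [min_eq_left ((div_le_one hy₁pos).mpr h), min_eq_left h]
        · rw [min_eq_right ((one_le_div hy₁pos).mpr h), min_eq_right h,
            div_self hy₁ne]
      have h4 : min (x₂ / y₁) 1 = min x₂ y₁ / y₁ := by
        rcases le_total x₂ y₁ with h | h
        · rw [min_eq_left ((div_le_one hy₁pos).mpr h), min_eq_left h]
        · rw [min_eq_right ((one_le_div hy₁pos).mpr h), min_eq_right h,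
            div_self hy₁ne]
      rw [h1, h2, h3, h4] at hEy
      have hEy' : p₁ * min x₁ y₁ + p₂ * min x₂ y₁ ≥ q₁ * y₁ + q₂ * y₂ := by
        have hh := mul_le_mul_of_nonneg_right hEy (le_of_lt hy₁pos)
        have hx3 : p₁ * (min x₁ y₁ / y₁) * y₁ = p₁ * min x₁ y₁ := by field_simp
        have hx4 : p₂ * (min x₂ y₁ / y₁) * y₁ = p₂ * min x₂ y₁ := by field_simp
        have hx5 : q₂ * (y₂ / y₁) * y₁ = q₂ * y₂ := by field_simp
        nlinarith only [hh, hx3, hx4, hx5]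
      have h5 : p₁ * y₂ + p₂ * y₂ = y₂ := by linear_combination y₂ * hp
      have h6 : q₁ * y₂ + q₂ * y₂ = y₂ := by linear_combination y₂ * hq
      rw [hAdef, hBdef, hsdef]
      nlinarith only [hEy', h5, h6]
    rcases le_or_gt (q₁ * s) (p₁ * A) with hc | hc
    · -- r₁ = q₁ / p₁, r₂ = 0
      have hr₁0 : 0 ≤ q₁ / p₁ := div_nonneg hq₁ (le_of_lt hp₁)
      have hr₁p : (q₁ / p₁) * p₁ = q₁ := div_mul_cancel₀ q₁ (ne_of_gt hp₁)
      have h9 : (q₁ / p₁) * s ≤ A := by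
        apply le_of_mul_le_mul_right _ hp₁
        have he : (q₁ / p₁) * s * p₁ = q₁ * s := by
          field_simp
        rw [he]
        linarith only [hc]
      have hr₁1 : q₁ / p₁ ≤ 1 := by
        apply le_of_mul_le_mul_right _ hs
        have : (q₁ / p₁) * s ≤ s := le_trans h9 hAs
        linarith only [this]
      refine ⟨q₁ / p₁, ⟨hr₁0, hr₁1⟩, 0, ⟨le_refl 0, zero_le_one⟩, ?_, ?_, ?_⟩
      · rw [mul_comm p₁, hr₁p]; ring
      · have he : (q₁ / p₁) * y₁ + (1 - q₁ / p₁) * y₂ = y₂ + (q₁ / p₁) * s := by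
          rw [hsdef]; ring
        rw [ge_iff_le, he]
        linarith only [h9, hAx]
      · rw [ge_iff_le]
        have : (0:ℝ) * y₁ + (1 - 0) * y₂ = y₂ := by ring
        rw [this]; exact hx2y2
    · -- r₁ = A / s, r₂ = (q₁ * s - p₁ * A) / (p₂ * s)
      have hp₂s : 0 < p₂ * s := mul_pos hp₂ hs
      obtain ⟨r₁, hr₁def⟩ : ∃ r : ℝ, r = A / s := ⟨_, rfl⟩
      obtain ⟨r₂, hr₂def⟩ : ∃ r : ℝ, r = (q₁ * s - p₁ * A) / (p₂ * s) := ⟨_, rfl⟩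
      have hr₁s : r₁ * s = A := by rw [hr₁def]; exact div_mul_cancel₀ A hsne
      have hr₂s : r₂ * (p₂ * s) = q₁ * s - p₁ * A := by
        rw [hr₂def]; exact div_mul_cancel₀ _ (ne_of_gt hp₂s)
      have hr₁0 : 0 ≤ r₁ := by rw [hr₁def]; exact div_nonneg hA0 (le_of_lt hs)
      have hr₁1 : r₁ ≤ 1 := by rw [hr₁def]; exact (div_le_one hs).mpr hAs
      have hr₂0 : 0 ≤ r₂ := by
        rw [hr₂def]
        apply div_nonneg _ (le_of_lt hp₂s)
        linarith only [hc]
      have hB2 : q₁ * s - p₁ * A ≤ p₂ * B := by linarith only [key]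
      have hr₂1 : r₂ ≤ 1 := by
        rw [hr₂def, div_le_one hp₂s]
        have : p₂ * B ≤ p₂ * s := mul_le_mul_of_nonneg_left hBs (le_of_lt hp₂)
        linarith only [hB2, this]
      refine ⟨r₁, ⟨hr₁0, hr₁1⟩, r₂, ⟨hr₂0, hr₂1⟩, ?_, ?_, ?_⟩
      · have hmul : q₁ * s = (p₁ * r₁ + p₂ * r₂) * s := by
          linear_combination -(p₁ * hr₁s) - hr₂s
        exact mul_right_cancel₀ hsne hmul
      · have he : r₁ * y₁ + (1 - r₁) * y₂ = y₂ + r₁ * s := by rw [hsdef]; ring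
        rw [ge_iff_le, he, hr₁s]
        linarith only [hAx]
      · have he : r₂ * y₁ + (1 - r₂) * y₂ = y₂ + r₂ * s := by rw [hsdef]; ring
        rw [ge_iff_le, he]
        have h10 : r₂ * s * p₂ ≤ (x₂ - y₂) * p₂ := by
          have h11 : p₂ * B ≤ p₂ * (x₂ - y₂) :=
            mul_le_mul_of_nonneg_left hBx (le_of_lt hp₂)
          have h12 : r₂ * s * p₂ = r₂ * (p₂ * s) := by ring
          rw [h12, hr₂s]
          linarith only [hB2, h11]
        have h13 : r₂ * s ≤ x₂ - y₂ := le_of_mul_le_mul_right h10 hp₂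
        linarith only [h13]
end

section
/- (Proposition 2, numerical form.) Let p₁, p₂ > 0 with p₁ + p₂ = 1, let q₁, q₂ ≥ 0 with q₁ + q₂ = 1, and let x₁, x₂, y₁, y₂ ∈ [0,1] with x₁ ≥ x₂ and y₁ ≥ y₂. Then the following are equivalent: (1) for every μ ∈ [0,1], p₁·f_μ(x₁) + p₂·f_μ(x₂) ≥ q₁·f_μ(y₁) + q₂·f_μ(y₂); (2) there exist r₁, r₂ ∈ [0,1] such that q₁ = p₁·r₁ + p₂·r₂, x₁ ≥ r₁·y₁ + (1−r₁)·y₂, and x₂ ≥ r₂·y₁ + (1−r₂)·y₂. -/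
/-- Pointwise concavity/monotonicity of `fmu`. -/
lemma fmu_point (μ : ℝ) (hμ : 0 ≤ μ) (x y₁ y₂ r : ℝ)
    (hy₁ : 0 ≤ y₁) (hy₂ : 0 ≤ y₂) (hr0 : 0 ≤ r) (hr1 : r ≤ 1)
    (hx : r * y₁ + (1 - r) * y₂ ≤ x) :
    r * fmu μ y₁ + (1 - r) * fmu μ y₂ ≤ fmu μ x := by
  rcases eq_or_lt_of_le hμ with h0 | hpos
  · -- μ = 0
    subst h0
    simp only [fmu, if_pos rfl]
    by_cases hx0 : x = 0
    · subst hx0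
      have t1 : 0 ≤ r * y₁ := mul_nonneg hr0 hy₁
      have t2 : 0 ≤ (1 - r) * y₂ := mul_nonneg (by linarith) hy₂
      have h1 : r * y₁ = 0 := by linarith
      have h2 : (1 - r) * y₂ = 0 := by linarith
      have k1 : y₁ ≠ 0 → r = 0 := fun h => by
        rcases mul_eq_zero.mp h1 with h' | h'
        exacts [h', absurd h' h]
      have k2 : y₂ ≠ 0 → r = 1 := fun h => by
        rcases mul_eq_zero.mp h2 with h' | h'
        · linarith
        · exact absurd h' h
      by_cases hy1 : y₁ = 0 <;> by_cases hy2 : y₂ = 0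
      · simp [hy1, hy2]
      · simp [hy1, hy2, k2 hy2]
      · simp [hy1, hy2, k1 hy1]
      · exact absurd ((k1 hy1).symm.trans (k2 hy2)) (by norm_num)
    · simp only [if_neg hx0]
      split_ifs <;> nlinarith
  · simp only [fmu, if_neg (ne_of_gt hpos)]
    have hA : r * min (y₁ / μ) 1 + (1 - r) * min (y₂ / μ) 1 ≤
        min ((r * y₁ + (1 - r) * y₂) / μ) 1 := by
      apply le_min
      · rw [add_div, mul_div_assoc, mul_div_assoc]
        have hr1' : (0:ℝ) ≤ 1 - r := by linarith
        nlinarith [min_le_left (y₁ / μ) 1, min_le_left (y₂ / μ) 1]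
      · nlinarith [min_le_right (y₁ / μ) 1, min_le_right (y₂ / μ) 1]
    exact hA.trans (min_le_min ((div_le_div_iff_of_pos_right hpos).mpr hx) le_rfl)

set_option maxHeartbeats 1600000 in
/-- Proposition 2 (numerical form): the monotone conditions
`E_μ(D₁) ≥ E_μ(D₂)` for all `μ ∈ [0,1]` hold if and only if there exist
conditional probabilities `r₁, r₂` witnessing (via the Jonathan–Plenio
theorem) that the transformation `D₁ → D₂` is realizable by LOCC. -/
theorem proposition2 (p₁ p₂ q₁ q₂ : ℝ)
    (hp₁ : 0 < p₁) (hp₂ : 0 < p₂) (hq₁ : 0 ≤ q₁) (hq₂ : 0 ≤ q₂)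
    (hp : p₁ + p₂ = 1) (hq : q₁ + q₂ = 1)
    (x₁ x₂ y₁ y₂ : ℝ)
    (hx₁ : x₁ ∈ Set.Icc (0:ℝ) 1) (hx₂ : x₂ ∈ Set.Icc (0:ℝ) 1)
    (hy₁ : y₁ ∈ Set.Icc (0:ℝ) 1) (hy₂ : y₂ ∈ Set.Icc (0:ℝ) 1)
    (hx : x₁ ≥ x₂) (hy : y₁ ≥ y₂) :
    (∀ μ ∈ Set.Icc (0:ℝ) 1,
      p₁ * fmu μ x₁ + p₂ * fmu μ x₂ ≥ q₁ * fmu μ y₁ + q₂ * fmu μ y₂) ↔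
    (∃ r₁ ∈ Set.Icc (0:ℝ) 1, ∃ r₂ ∈ Set.Icc (0:ℝ) 1,
      q₁ = p₁ * r₁ + p₂ * r₂ ∧
      x₁ ≥ r₁ * y₁ + (1 - r₁) * y₂ ∧
      x₂ ≥ r₂ * y₁ + (1 - r₂) * y₂) := by
  constructor
  · -- forward : monotones ⇒ existence of r₁, r₂
    intro h
    -- Step 1 : y₂ ≤ x₂
    have hx2y2 : y₂ ≤ x₂ := by
      rcases eq_or_lt_of_le hy₂.1 with h0 | hpos
      · exact h0 ▸ hx₂.1
      · have hh := h y₂ ⟨hy₂.1, hy₂.2⟩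
        simp only [fmu, if_neg (ne_of_gt hpos)] at hh
        rw [min_eq_right ((one_le_div hpos).mpr hy),
            min_eq_right (le_of_eq (div_self (ne_of_gt hpos)).symm)] at hh
        have hm1 : min (x₁ / y₂) 1 ≤ 1 := min_le_right _ _
        have hm2 : 1 ≤ min (x₂ / y₂) 1 := by nlinarith
        have : (1:ℝ) ≤ x₂ / y₂ := le_trans hm2 (min_le_left _ _)
        calc y₂ = 1 * y₂ := (one_mul _).symm
          _ ≤ (x₂ / y₂) * y₂ := by nlinarith
          _ = x₂ := by field_simp
    have hx1y2 : y₂ ≤ x₁ := le_trans hx2y2 hx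
    rcases eq_or_lt_of_le hy with hyy | hyy
    · -- y₂ = y₁
      refine ⟨q₁, ⟨hq₁, by linarith⟩, q₁, ⟨hq₁, by linarith⟩,
        by linear_combination (-q₁) * hp, ?_, ?_⟩
      · rw [← hyy]; nlinarith
      · rw [← hyy]; nlinarith
    · -- y₂ < y₁
      have hy1pos : 0 < y₁ := lt_of_le_of_lt hy₂.1 hyy
      have hdpos : 0 < y₁ - y₂ := by linarith
      have hh := h y₁ ⟨hy₁.1, hy₁.2⟩
      simp only [fmu, if_neg (ne_of_gt hy1pos)] at hh
      rw [min_eq_right (le_of_eq (div_self (ne_of_gt hy1pos)).symm),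
          min_eq_left ((div_le_one hy1pos).mpr hy)] at hh
      have hcm : ∀ x : ℝ, y₂ ≤ x →
          min 1 ((x - y₂) / (y₁ - y₂)) * (y₁ - y₂) = min (x / y₁) 1 * y₁ - y₂ := by
        intro x hxy
        rcases le_or_gt y₁ x with hcase | hcase
        · rw [min_eq_left ((le_div_iff₀ hdpos).mpr (by linarith)),
              min_eq_right ((one_le_div hy1pos).mpr hcase)]
          ring
        · rw [min_eq_right ((div_le_one hdpos).mpr (by linarith)),
              min_eq_left ((div_le_one hy1pos).mpr hcase.le)]
          rw [div_mul_cancel₀ _ hdpos.ne', div_mul_cancel₀ _ hy1pos.ne']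
      obtain ⟨c₁, hc₁⟩ : ∃ c, c = min 1 ((x₁ - y₂) / (y₁ - y₂)) := ⟨_, rfl⟩
      obtain ⟨c₂, hc₂⟩ : ∃ c, c = min 1 ((x₂ - y₂) / (y₁ - y₂)) := ⟨_, rfl⟩
      have hc₁0 : 0 ≤ c₁ := hc₁ ▸ le_min (by norm_num) (div_nonneg (by linarith) hdpos.le)
      have hc₂0 : 0 ≤ c₂ := hc₂ ▸ le_min (by norm_num) (div_nonneg (by linarith) hdpos.le)
      have hc₁1 : c₁ ≤ 1 := hc₁ ▸ min_le_left _ _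
      have hc₂1 : c₂ ≤ 1 := hc₂ ▸ min_le_left _ _
      have hk1 : c₁ * (y₁ - y₂) = min (x₁ / y₁) 1 * y₁ - y₂ := by
        rw [hc₁]; exact hcm x₁ hx1y2
      have hk2 : c₂ * (y₁ - y₂) = min (x₂ / y₁) 1 * y₁ - y₂ := by
        rw [hc₂]; exact hcm x₂ hx2y2
      -- fold products with p₁, p₂
      have hk1' : p₁ * (c₁ * (y₁ - y₂)) = p₁ * (min (x₁ / y₁) 1 * y₁ - y₂) := by
        rw [hk1]
      have hk2' : p₂ * (c₂ * (y₁ - y₂)) = p₂ * (min (x₂ / y₁) 1 * y₁ - y₂) := by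
        rw [hk2]
      have hhy : (q₁ * 1 + q₂ * (y₂ / y₁)) * y₁ ≤
          (p₁ * min (x₁ / y₁) 1 + p₂ * min (x₂ / y₁) 1) * y₁ :=
        mul_le_mul_of_nonneg_right hh hy1pos.le
      have hw' : q₂ * (y₂ / y₁) * y₁ = q₂ * y₂ := by
        rw [mul_assoc, div_mul_cancel₀ _ hy1pos.ne']
      have hpy : p₁ * y₂ + p₂ * y₂ = y₂ := by linear_combination y₂ * hp
      have hqy : q₁ * y₂ + q₂ * y₂ = y₂ := by linear_combination y₂ * hq
      have h5 : q₁ * (y₁ - y₂) ≤ (p₁ * c₁ + p₂ * c₂) * (y₁ - y₂) := by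
        nlinarith [hk1', hk2', hhy, hw', hpy, hqy]
      have hkey : q₁ ≤ p₁ * c₁ + p₂ * c₂ :=
        le_of_mul_le_mul_right (by linarith [h5]) hdpos
      rcases le_or_gt (p₁ * c₁ + p₂ * c₂) 0 with hS | hS
      · have hq10 : q₁ = 0 := le_antisymm (le_trans hkey hS) hq₁
        exact ⟨0, ⟨le_rfl, by norm_num⟩, 0, ⟨le_rfl, by norm_num⟩,
          by rw [hq10]; ring, by nlinarith, by nlinarith⟩
      · obtain ⟨S, hSdef⟩ : ∃ S, S = p₁ * c₁ + p₂ * c₂ := ⟨_, rfl⟩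
        rw [← hSdef] at hS hkey
        have hSne : S ≠ 0 := hS.ne'
        refine ⟨q₁ * c₁ / S, ⟨div_nonneg (mul_nonneg hq₁ hc₁0) hS.le, ?_⟩,
          q₁ * c₂ / S, ⟨div_nonneg (mul_nonneg hq₁ hc₂0) hS.le, ?_⟩,
          ?_, ?_, ?_⟩
        · rw [div_le_one hS]; nlinarith
        · rw [div_le_one hS]; nlinarith
        · field_simp
          linear_combination q₁ * hSdef
        · have hr : q₁ * c₁ / S ≤ c₁ := by
            rw [div_le_iff₀ hS]; nlinarith
          have hmx : min (x₁ / y₁) 1 * y₁ ≤ x₁ := by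
            calc min (x₁ / y₁) 1 * y₁ ≤ (x₁ / y₁) * y₁ :=
                  mul_le_mul_of_nonneg_right (min_le_left _ _) hy1pos.le
              _ = x₁ := div_mul_cancel₀ _ hy1pos.ne'
          have hcd : c₁ * (y₁ - y₂) ≤ x₁ - y₂ := by linarith [hk1]
          have hstep := mul_le_mul_of_nonneg_right hr hdpos.le
          linarith [hstep, hcd]
        · have hr : q₁ * c₂ / S ≤ c₂ := by
            rw [div_le_iff₀ hS]; nlinarith
          have hmx : min (x₂ / y₁) 1 * y₁ ≤ x₂ := by
            calc min (x₂ / y₁) 1 * y₁ ≤ (x₂ / y₁) * y₁ :=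
                  mul_le_mul_of_nonneg_right (min_le_left _ _) hy1pos.le
              _ = x₂ := div_mul_cancel₀ _ hy1pos.ne'
          have hcd : c₂ * (y₁ - y₂) ≤ x₂ - y₂ := by linarith [hk2]
          have hstep := mul_le_mul_of_nonneg_right hr hdpos.le
          linarith [hstep, hcd]
  · -- backward : existence of r₁, r₂ ⇒ monotones
    rintro ⟨r₁, ⟨hr₁0, hr₁1⟩, r₂, ⟨hr₂0, hr₂1⟩, hqeq, h1, h2⟩ μ hμ
    have A := fmu_point μ hμ.1 x₁ y₁ y₂ r₁ hy₁.1 hy₂.1 hr₁0 hr₁1 h1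
    have B := fmu_point μ hμ.1 x₂ y₁ y₂ r₂ hy₁.1 hy₂.1 hr₂0 hr₂1 h2
    have hA := mul_le_mul_of_nonneg_left A hp₁.le
    have hB := mul_le_mul_of_nonneg_left B hp₂.le
    set a := fmu μ y₁
    set b := fmu μ y₂
    have key : q₁ * a + q₂ * b =
        p₁ * (r₁ * a + (1 - r₁) * b) + p₂ * (r₂ * a + (1 - r₂) * b) := by
      linear_combination (a - b) * hqeq + b * hq - b * hp
    rw [ge_iff_le, key]
    exact add_le_add hA hB
end

section
/- (Case (b) of Proposition 2.) Let p₁, p₂ > 0 with p₁ + p₂ = 1, let q₁, q₂ ≥ 0 with q₁ + q₂ = 1, and let x₁, x₂, y₁, y₂ ∈ [0,1] with x₁ ≥ y₁ > x₂ ≥ y₂. Then there exist r₁, r₂ ∈ [0,1] with q₁ = p₁·r₁ + p₂·r₂, x₁ ≥ r₁·y₁ + (1−r₁)·y₂, and x₂ ≥ r₂·y₁ + (1−r₂)·y₂ if and only if p₁·y₁ + p₂·x₂ ≥ q₁·y₁ + q₂·y₂. -/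
/-!
Write `d = y₁ - y₂ ≥ 0`. Since `x₁ ≥ y₁`, the first constraint holds for every `r₁ ∈ [0,1]`,
while the second caps `p₂ r₂ d` by `p₂ (x₂ - y₂)`. Hence the best split of `q₁` is the greedy
one, which saturates `r₁` before using `r₂`: it needs `p₂ r₂ = max 0 (q₁ - p₁)`, and the
constraint `(q₁ - p₁) d ≤ p₂ (x₂ - y₂)` is the claimed inequality rearranged.
-/

open Set

lemma exists_greedy_split {p₁ p₂ q : ℝ} (hp₁ : 0 < p₁) (hp₂ : 0 < p₂) (hp : p₁ + p₂ = 1)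
    (hq₀ : 0 ≤ q) (hq₁ : q ≤ 1) :
    ∃ r₁ ∈ Icc (0 : ℝ) 1, ∃ r₂ ∈ Icc (0 : ℝ) 1, q = p₁ * r₁ + p₂ * r₂ ∧ (r₂ = 0 ∨ r₁ = 1) := by
  by_cases hqp : q ≤ p₁
  · refine ⟨q / p₁, ⟨by positivity, (div_le_one hp₁).2 hqp⟩, 0, left_mem_Icc.2 zero_le_one,
      ?_, Or.inl rfl⟩
    field_simp
    ring
  · replace hqp := (not_le.1 hqp).le
    refine ⟨1, right_mem_Icc.2 zero_le_one, (q - p₁) / p₂,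
      ⟨div_nonneg (by linarith) hp₂.le, (div_le_one hp₂).2 (by linarith)⟩, ?_, Or.inr rfl⟩
    field_simp
    ring

lemma mix_le_of_le {a b r : ℝ} (hr : r ∈ Icc (0 : ℝ) 1) (hba : b ≤ a) :
    r * a + (1 - r) * b ≤ a := by
  nlinarith [hr.1, hr.2]

theorem proposition2_case_b_general (p₁ p₂ q₁ q₂ : ℝ)
    (hp₁ : 0 < p₁) (hp₂ : 0 < p₂) (hq₁ : 0 ≤ q₁) (hq₂ : 0 ≤ q₂)
    (hp : p₁ + p₂ = 1) (hq : q₁ + q₂ = 1)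
    (x₁ x₂ y₁ y₂ : ℝ)
    (h12 : x₁ ≥ y₁) (h23 : y₁ > x₂) (h34 : x₂ ≥ y₂) :
    (∃ r₁ ∈ Set.Icc (0:ℝ) 1, ∃ r₂ ∈ Set.Icc (0:ℝ) 1,
      q₁ = p₁ * r₁ + p₂ * r₂ ∧
      x₁ ≥ r₁ * y₁ + (1 - r₁) * y₂ ∧
      x₂ ≥ r₂ * y₁ + (1 - r₂) * y₂) ↔
    p₁ * y₁ + p₂ * x₂ ≥ q₁ * y₁ + q₂ * y₂ := by
  have hy : y₂ ≤ y₁ := h34.trans h23.le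
  obtain rfl : q₂ = 1 - q₁ := by linarith
  obtain rfl : p₂ = 1 - p₁ := by linarith
  constructor
  · rintro ⟨r₁, ⟨-, hr₁⟩, r₂, -, rfl, -, hx₂⟩
    -- the slack is `p₁ (1 - r₁) (y₁ - y₂) + p₂ (x₂ - r₂ y₁ - (1 - r₂) y₂)`
    nlinarith [mul_nonneg (mul_nonneg hp₁.le (sub_nonneg.2 hr₁)) (sub_nonneg.2 hy),
      mul_le_mul_of_nonneg_left hx₂ hp₂.le]
  · intro h
    obtain ⟨r₁, hr₁, r₂, hr₂, rfl, hsat⟩ := exists_greedy_split hp₁ hp₂ (by ring) hq₁ (by linarith)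
    refine ⟨r₁, hr₁, r₂, hr₂, rfl, (mix_le_of_le hr₁ hy).trans h12, ?_⟩
    rcases hsat with rfl | rfl
    · linarith
    · refine le_of_mul_le_mul_left ?_ hp₂
      nlinarith

/-- Case (b) of Proposition 2: if `x₁ ≥ y₁ > x₂ ≥ y₂`, then conditional
probabilities `r₁, r₂` witnessing locality of the transformation (via the
Jonathan–Plenio theorem) exist if and only if
`p₁·y₁ + p₂·x₂ ≥ q₁·y₁ + q₂·y₂`. -/
theorem proposition2_case_b (p₁ p₂ q₁ q₂ : ℝ)
    (hp₁ : 0 < p₁) (hp₂ : 0 < p₂) (hq₁ : 0 ≤ q₁) (hq₂ : 0 ≤ q₂)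
    (hp : p₁ + p₂ = 1) (hq : q₁ + q₂ = 1)
    (x₁ x₂ y₁ y₂ : ℝ)
    (hx₁ : x₁ ∈ Set.Icc (0:ℝ) 1) (hx₂ : x₂ ∈ Set.Icc (0:ℝ) 1)
    (hy₁ : y₁ ∈ Set.Icc (0:ℝ) 1) (hy₂ : y₂ ∈ Set.Icc (0:ℝ) 1)
    (h12 : x₁ ≥ y₁) (h23 : y₁ > x₂) (h34 : x₂ ≥ y₂) :
    (∃ r₁ ∈ Set.Icc (0:ℝ) 1, ∃ r₂ ∈ Set.Icc (0:ℝ) 1,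
      q₁ = p₁ * r₁ + p₂ * r₂ ∧
      x₁ ≥ r₁ * y₁ + (1 - r₁) * y₂ ∧
      x₂ ≥ r₂ * y₁ + (1 - r₂) * y₂) ↔
    p₁ * y₁ + p₂ * x₂ ≥ q₁ * y₁ + q₂ * y₂ :=
  proposition2_case_b_general p₁ p₂ q₁ q₂ hp₁ hp₂ hq₁ hq₂ hp hq x₁ x₂ y₁ y₂ h12 h23 h34
end

section
/- (Case (c) of Proposition 2.) Let p₁, p₂ > 0 with p₁ + p₂ = 1, let q₁, q₂ ≥ 0 with q₁ + q₂ = 1, and let x₁, x₂, y₁, y₂ ∈ [0,1] with y₁ ≥ x₁ > x₂ ≥ y₂. Then there exist r₁, r₂ ∈ [0,1] with q₁ = p₁·r₁ + p₂·r₂, x₁ ≥ r₁·y₁ + (1−r₁)·y₂, and x₂ ≥ r₂·y₁ + (1−r₂)·y₂ if and only if p₁·x₁ + p₂·x₂ ≥ q₁·y₁ + q₂·y₂. -/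
/-- Case (c) of Proposition 2: if `y₁ ≥ x₁ > x₂ ≥ y₂`, then conditional
probabilities `r₁, r₂` witnessing locality of the transformation (via the
Jonathan–Plenio theorem) exist if and only if
`p₁·x₁ + p₂·x₂ ≥ q₁·y₁ + q₂·y₂`. -/
theorem proposition2_case_c (p₁ p₂ q₁ q₂ : ℝ)
    (hp₁ : 0 < p₁) (hp₂ : 0 < p₂) (hq₁ : 0 ≤ q₁) (hq₂ : 0 ≤ q₂)
    (hp : p₁ + p₂ = 1) (hq : q₁ + q₂ = 1)
    (x₁ x₂ y₁ y₂ : ℝ)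
    (hx₁ : x₁ ∈ Set.Icc (0:ℝ) 1) (hx₂ : x₂ ∈ Set.Icc (0:ℝ) 1)
    (hy₁ : y₁ ∈ Set.Icc (0:ℝ) 1) (hy₂ : y₂ ∈ Set.Icc (0:ℝ) 1)
    (h12 : y₁ ≥ x₁) (h23 : x₁ > x₂) (h34 : x₂ ≥ y₂) :
    (∃ r₁ ∈ Set.Icc (0:ℝ) 1, ∃ r₂ ∈ Set.Icc (0:ℝ) 1,
      q₁ = p₁ * r₁ + p₂ * r₂ ∧
      x₁ ≥ r₁ * y₁ + (1 - r₁) * y₂ ∧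
      x₂ ≥ r₂ * y₁ + (1 - r₂) * y₂) ↔
    p₁ * x₁ + p₂ * x₂ ≥ q₁ * y₁ + q₂ * y₂ := by
  constructor
  · rintro ⟨r₁, ⟨hr₁0, hr₁1⟩, r₂, ⟨hr₂0, hr₂1⟩, hsum, h1, h2⟩
    have hq₂' : q₂ = p₁ * (1 - r₁) + p₂ * (1 - r₂) := by nlinarith
    have e : q₁ * y₁ + q₂ * y₂ =
        p₁ * (r₁ * y₁ + (1 - r₁) * y₂) + p₂ * (r₂ * y₁ + (1 - r₂) * y₂) := by
      rw [hsum, hq₂']; ring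
    rw [e]
    have := mul_le_mul_of_nonneg_left h1 hp₁.le
    have := mul_le_mul_of_nonneg_left h2 hp₂.le
    linarith
  · intro h
    have hd : 0 < y₁ - y₂ := by linarith
    set s : ℝ := p₁ * (x₁ - y₂) + p₂ * (x₂ - y₂) with hs
    have hs0 : 0 < s := by nlinarith
    have hq' : q₂ = 1 - q₁ := by linarith
    subst hq'
    have hpy : p₁ * y₂ + p₂ * y₂ = y₂ := by rw [← add_mul, hp, one_mul]
    have hkey : q₁ * (y₁ - y₂) ≤ s := by
      have h' : p₁ * x₁ + p₂ * x₂ ≥ q₁ * y₁ + (1 - q₁) * y₂ := h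
      nlinarith
    refine ⟨q₁ * (x₁ - y₂) / s, ⟨div_nonneg (mul_nonneg hq₁ (by linarith)) hs0.le, ?_⟩,
      q₁ * (x₂ - y₂) / s, ⟨div_nonneg (mul_nonneg hq₁ (by linarith)) hs0.le, ?_⟩, ?_, ?_, ?_⟩
    · rw [div_le_one hs0]; nlinarith
    · rw [div_le_one hs0]; nlinarith
    · field_simp; ring
    · have : q₁ * (x₁ - y₂) / s * (y₁ - y₂) ≤ x₁ - y₂ := by
        rw [div_mul_eq_mul_div, div_le_iff₀ hs0]; nlinarith
      nlinarith
    · have : q₁ * (x₂ - y₂) / s * (y₁ - y₂) ≤ x₂ - y₂ := by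
        rw [div_mul_eq_mul_div, div_le_iff₀ hs0]; nlinarith
      nlinarith
end
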